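/- Let T ∈ V_1 ⊗ V_2 ⊗ V_3 be a concise tensor. Then the following are equivalent: (1) there exists a nonzero tuple (X_1, X_2, X_3) ∈ Cen(T), different from the identity tuple, with (X_1, X_2, X_3)² = (X_1, X_2, X_3); (2) there exist nonzero subspace decompositions V_i = V_{i,1} ⊕ V_{i,2} and nonzero tensors T_j ∈ V_{1,j} ⊗ V_{2,j} ⊗ V_{3,j} (j = 1, 2) with T = T_1 + T_2. -/

import Mathlib

/-!
An idempotent `c` of the centroid splits `T` as `c₁·T + (1 - c₁)·T`, and `1 - c` is again an
idempotent of the centroid. For an idempotent `c` of the centroid, acting in one slot is the same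
as acting in all three (`c₁·T = c₂·T = c₃·T` and `c² = c`), so `c₁·T` lies in
`im c₁ ⊗ im c₂ ⊗ im c₃`, and likewise `(1 - c₁)·T` in the complementary product. Conciseness
makes both pieces nonzero: if `c₁·T = 0`, then `1 - c` fixes `T`, so `T` lies in the product of
the images of `1 - c`, which are therefore everything, forcing `c = 0`.
Conversely, the projections along a direct sum decomposition form such an idempotent.
-/

open TensorProduct

variable {k : Type*} [Field k] {V1 V2 V3 : Type*}
  [AddCommGroup V1] [Module k V1] [AddCommGroup V2] [Module k V2]
  [AddCommGroup V3] [Module k V3]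
  [FiniteDimensional k V1] [FiniteDimensional k V2] [FiniteDimensional k V3]

/-- Application of an endomorphism on the first tensor factor. -/
noncomputable def app1 (X : Module.End k V1) :
    (V1 ⊗[k] V2) ⊗[k] V3 →ₗ[k] (V1 ⊗[k] V2) ⊗[k] V3 :=
  TensorProduct.map (TensorProduct.map X LinearMap.id) LinearMap.id

/-- Application of an endomorphism on the second tensor factor. -/
noncomputable def app2 (Y : Module.End k V2) :
    (V1 ⊗[k] V2) ⊗[k] V3 →ₗ[k] (V1 ⊗[k] V2) ⊗[k] V3 :=
  TensorProduct.map (TensorProduct.map LinearMap.id Y) LinearMap.id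

/-- Application of an endomorphism on the third tensor factor. -/
noncomputable def app3 (Z : Module.End k V3) :
    (V1 ⊗[k] V2) ⊗[k] V3 →ₗ[k] (V1 ⊗[k] V2) ⊗[k] V3 :=
  TensorProduct.map (TensorProduct.map LinearMap.id LinearMap.id) Z

/-- The centroid of a tensor `T ∈ V1 ⊗ V2 ⊗ V3`: tuples of endomorphisms acting
equally on each factor. -/
noncomputable def Cen (T : (V1 ⊗[k] V2) ⊗[k] V3) :
    Set (Module.End k V1 × Module.End k V2 × Module.End k V3) :=
  {c | app1 c.1 T = app2 c.2.1 T ∧ app2 c.2.1 T = app3 c.2.2 T}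

/-- A tensor is concise if it lies in no product of subspaces with at least one proper. -/
def Concise (T : (V1 ⊗[k] V2) ⊗[k] V3) : Prop :=
  ∀ (W1 : Submodule k V1) (W2 : Submodule k V2) (W3 : Submodule k V3),
    T ∈ LinearMap.range
      (TensorProduct.map (TensorProduct.map W1.subtype W2.subtype) W3.subtype) →
    W1 = ⊤ ∧ W2 = ⊤ ∧ W3 = ⊤
open LinearMap

theorem Prod.isIdempotentElem_iff₃ {A B C : Type*} [Mul A] [Mul B] [Mul C] {x : A × B × C} :
    IsIdempotentElem x ↔
      IsIdempotentElem x.1 ∧ IsIdempotentElem x.2.1 ∧ IsIdempotentElem x.2.2 :=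
  Prod.ext_iff.trans (and_congr_right' Prod.ext_iff)

section
variable {R : Type*}

theorem IsIdempotentElem.eq_one_of_range_eq_top [Semiring R] {M : Type*} [AddCommMonoid M]
    [Module R M] {f : Module.End R M} (hf : IsIdempotentElem f) (h : range f = ⊤) : f = 1 :=
  LinearMap.ext fun _ ↦ hf.mem_range_iff.mp (h ▸ Submodule.mem_top)

theorem IsIdempotentElem.isCompl_range_one_sub [Ring R] {M : Type*} [AddCommGroup M] [Module R M]
    {f : Module.End R M} (hf : IsIdempotentElem f) : IsCompl (range f) (range (1 - f)) :=
  hf.ker_eq_range_one_sub ▸ hf.isCompl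

variable [CommSemiring R] {M₁ M₂ M₃ N₁ N₂ N₃ : Type*}
  [AddCommMonoid M₁] [Module R M₁] [AddCommMonoid M₂] [Module R M₂]
  [AddCommMonoid M₃] [Module R M₃] [AddCommMonoid N₁] [Module R N₁]
  [AddCommMonoid N₂] [Module R N₂] [AddCommMonoid N₃] [Module R N₃]

theorem range_map_map_le_range_map_map_subtype
    (f₁ : M₁ →ₗ[R] N₁) (f₂ : M₂ →ₗ[R] N₂) (f₃ : M₃ →ₗ[R] N₃) :
    range (map (map f₁ f₂) f₃) ≤
      range (map (map (range f₁).subtype (range f₂).subtype) (range f₃).subtype) := by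
  have : map (map f₁ f₂) f₃ = map (map (range f₁).subtype (range f₂).subtype) (range f₃).subtype ∘ₗ
      map (map f₁.rangeRestrict f₂.rangeRestrict) f₃.rangeRestrict := by
    simp only [← map_comp, subtype_comp_codRestrict]
  rw [this]
  exact range_comp_le_range _ _

theorem map_map_apply_eq_self_of_mem_range {p₁ : Submodule R N₁} {p₂ : Submodule R N₂}
    {p₃ : Submodule R N₃} {f₁ : Module.End R N₁} {f₂ : Module.End R N₂} {f₃ : Module.End R N₃}
    (h₁ : ∀ x ∈ p₁, f₁ x = x) (h₂ : ∀ x ∈ p₂, f₂ x = x) (h₃ : ∀ x ∈ p₃, f₃ x = x)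
    {t : (N₁ ⊗[R] N₂) ⊗[R] N₃} (ht : t ∈ range (map (map p₁.subtype p₂.subtype) p₃.subtype)) :
    map (map f₁ f₂) f₃ t = t := by
  obtain ⟨u, rfl⟩ := ht
  have e₁ : f₁ ∘ₗ p₁.subtype = p₁.subtype := LinearMap.ext fun x ↦ h₁ x x.2
  have e₂ : f₂ ∘ₗ p₂.subtype = p₂.subtype := LinearMap.ext fun x ↦ h₂ x x.2
  have e₃ : f₃ ∘ₗ p₃.subtype = p₃.subtype := LinearMap.ext fun x ↦ h₃ x x.2
  rw [← comp_apply, ← map_comp, ← map_comp, e₁, e₂, e₃]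

end

section
variable {K : Type*} [Field K] {U₁ U₂ U₃ : Type*}
  [AddCommGroup U₁] [Module K U₁] [AddCommGroup U₂] [Module K U₂] [AddCommGroup U₃] [Module K U₃]

open Module.End

theorem app1_eq_rTensorAlgHom (X : Module.End K U₁) :
    app1 (V2 := U₂) (V3 := U₃) X = rTensorAlgHom K _ U₃ (rTensorAlgHom K U₁ U₂ X) := rfl

theorem app2_eq_rTensorAlgHom (X : Module.End K U₂) :
    app2 (V1 := U₁) (V3 := U₃) X = rTensorAlgHom K _ U₃ (lTensorAlgHom K U₂ U₁ X) := rfl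

theorem app3_eq_lTensorAlgHom (X : Module.End K U₃) :
    app3 (V1 := U₁) (V2 := U₂) X = lTensorAlgHom K U₃ (U₁ ⊗[K] U₂) X := by
  rw [app3, map_id]
  rfl

theorem app1_one_sub (X : Module.End K U₁) (t : (U₁ ⊗[K] U₂) ⊗[K] U₃) :
    app1 (1 - X) t = t - app1 X t := by
  simp [app1_eq_rTensorAlgHom]

theorem app2_one_sub (X : Module.End K U₂) (t : (U₁ ⊗[K] U₂) ⊗[K] U₃) :
    app2 (1 - X) t = t - app2 X t := by
  simp [app2_eq_rTensorAlgHom]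

theorem app3_one_sub (X : Module.End K U₃) (t : (U₁ ⊗[K] U₂) ⊗[K] U₃) :
    app3 (1 - X) t = t - app3 X t := by
  simp [app3_eq_lTensorAlgHom]

theorem app1_zero (t : (U₁ ⊗[K] U₂) ⊗[K] U₃) : app1 (0 : Module.End K U₁) t = 0 := by
  simp [app1_eq_rTensorAlgHom]

theorem app2_zero (t : (U₁ ⊗[K] U₂) ⊗[K] U₃) : app2 (0 : Module.End K U₂) t = 0 := by
  simp [app2_eq_rTensorAlgHom]

theorem app3_zero (t : (U₁ ⊗[K] U₂) ⊗[K] U₃) : app3 (0 : Module.End K U₃) t = 0 := by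
  simp [app3_eq_lTensorAlgHom]

theorem app1_mul (X Y : Module.End K U₁) (t : (U₁ ⊗[K] U₂) ⊗[K] U₃) :
    app1 (X * Y) t = app1 X (app1 Y t) := by
  simp [app1_eq_rTensorAlgHom]

theorem app2_mul (X Y : Module.End K U₂) (t : (U₁ ⊗[K] U₂) ⊗[K] U₃) :
    app2 (X * Y) t = app2 X (app2 Y t) := by
  simp [app2_eq_rTensorAlgHom]

theorem map_map_apply_eq_app1_app2_app3 (X : Module.End K U₁) (Y : Module.End K U₂)
    (Z : Module.End K U₃) (t : (U₁ ⊗[K] U₂) ⊗[K] U₃) :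
    map (map X Y) Z t = app1 X (app2 Y (app3 Z t)) := by
  simp only [app1, app2, app3, ← comp_apply, ← map_comp, comp_id, id_comp]

variable {T : (U₁ ⊗[K] U₂) ⊗[K] U₃} {c : Module.End K U₁ × Module.End K U₂ × Module.End K U₃}

theorem one_sub_mem_cen (hc : c ∈ Cen T) : 1 - c ∈ Cen T := by
  obtain ⟨h₁₂, h₂₃⟩ := hc
  simp only [Cen, Set.mem_ofPred_eq, Prod.fst_sub, Prod.snd_sub, Prod.fst_one, Prod.snd_one,
    app1_one_sub, app2_one_sub, app3_one_sub, h₁₂, h₂₃, and_self]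

theorem map_map_apply_of_mem_cen (hc : c ∈ Cen T) (hidem : IsIdempotentElem c) :
    map (map c.1 c.2.1) c.2.2 T = app1 c.1 T := by
  obtain ⟨h₁₂, h₂₃⟩ := hc
  obtain ⟨h₁, h₂, -⟩ := Prod.isIdempotentElem_iff₃.mp hidem
  rw [map_map_apply_eq_app1_app2_app3, ← h₂₃, ← app2_mul, h₂.eq, ← h₁₂, ← app1_mul, h₁.eq]

theorem app1_mem_range_of_mem_cen (hc : c ∈ Cen T) (hidem : IsIdempotentElem c) :
    app1 c.1 T ∈
      range (map (map (range c.1).subtype (range c.2.1).subtype) (range c.2.2).subtype) :=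
  range_map_map_le_range_map_map_subtype _ _ _ ⟨T, map_map_apply_of_mem_cen hc hidem⟩

theorem Concise.eq_zero_of_mem_cen (hT : Concise T) (hc : c ∈ Cen T) (hidem : IsIdempotentElem c)
    (h₀ : app1 c.1 T = 0) : c = 0 := by
  have hT' : T ∈ range (map (map (range (1 - c).1).subtype (range (1 - c).2.1).subtype)
      (range (1 - c).2.2).subtype) := by
    simpa [app1_one_sub, h₀] using app1_mem_range_of_mem_cen (one_sub_mem_cen hc) hidem.one_sub
  obtain ⟨r₁, r₂, r₃⟩ := hT _ _ _ hT'
  obtain ⟨h₁, h₂, h₃⟩ := Prod.isIdempotentElem_iff₃.mp hidem.one_sub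
  rw [← sub_eq_self (a := (1 : Module.End K U₁ × Module.End K U₂ × Module.End K U₃))]
  exact (Prod.ext (h₁.eq_one_of_range_eq_top r₁)
    (Prod.ext (h₂.eq_one_of_range_eq_top r₂) (h₃.eq_one_of_range_eq_top r₃)))

theorem range_ne_bot_of_mem_cen (hc : c ∈ Cen T) (hT₁ : app1 c.1 T ≠ 0) :
    range c.1 ≠ ⊥ ∧ range c.2.1 ≠ ⊥ ∧ range c.2.2 ≠ ⊥ := by
  obtain ⟨h₁₂, h₂₃⟩ := hc
  simp only [ne_eq, range_eq_bot]
  refine ⟨?_, ?_, ?_⟩ <;> rintro h₀ <;> apply hT₁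
  · rw [h₀, app1_zero]
  · rw [h₁₂, h₀, app2_zero]
  · rw [h₁₂, h₂₃, h₀, app3_zero]

theorem app_eq_self_of_mem_range_map_map_subtype {p₁ : Submodule K U₁} {p₂ : Submodule K U₂}
    {p₃ : Submodule K U₃} (h₁ : ∀ x ∈ p₁, c.1 x = x) (h₂ : ∀ x ∈ p₂, c.2.1 x = x)
    (h₃ : ∀ x ∈ p₃, c.2.2 x = x) {t : (U₁ ⊗[K] U₂) ⊗[K] U₃}
    (ht : t ∈ range (map (map p₁.subtype p₂.subtype) p₃.subtype)) :
    app1 c.1 t = t ∧ app2 c.2.1 t = t ∧ app3 c.2.2 t = t :=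
  ⟨map_map_apply_eq_self_of_mem_range h₁ (fun _ _ ↦ rfl) (fun _ _ ↦ rfl) ht,
    map_map_apply_eq_self_of_mem_range (fun _ _ ↦ rfl) h₂ (fun _ _ ↦ rfl) ht,
    map_map_apply_eq_self_of_mem_range (fun _ _ ↦ rfl) (fun _ _ ↦ rfl) h₃ ht⟩

theorem mem_cen_add_of_add_eq_one {d : Module.End K U₁ × Module.End K U₂ × Module.End K U₃}
    (hcd : c + d = 1) {T₁ T₂ : (U₁ ⊗[K] U₂) ⊗[K] U₃}
    (hc : app1 c.1 T₁ = T₁ ∧ app2 c.2.1 T₁ = T₁ ∧ app3 c.2.2 T₁ = T₁)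
    (hd : app1 d.1 T₂ = T₂ ∧ app2 d.2.1 T₂ = T₂ ∧ app3 d.2.2 T₂ = T₂) :
    c ∈ Cen (T₁ + T₂) := by
  obtain rfl : d = 1 - c := eq_sub_of_add_eq' hcd
  obtain ⟨e₁, e₂, e₃⟩ := hc
  obtain ⟨f₁, f₂, f₃⟩ := hd
  simp only [Prod.fst_sub, Prod.snd_sub, Prod.fst_one, Prod.snd_one, app1_one_sub, app2_one_sub,
    app3_one_sub, sub_eq_self] at f₁ f₂ f₃
  simp only [Cen, Set.mem_ofPred_eq, map_add, e₁, e₂, e₃, f₁, f₂, f₃, and_self]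

theorem projection_mem_cen_add {p₁ q₁ : Submodule K U₁} {p₂ q₂ : Submodule K U₂}
    {p₃ q₃ : Submodule K U₃} (h₁ : IsCompl p₁ q₁) (h₂ : IsCompl p₂ q₂) (h₃ : IsCompl p₃ q₃)
    {T₁ T₂ : (U₁ ⊗[K] U₂) ⊗[K] U₃}
    (hT₁ : T₁ ∈ range (map (map p₁.subtype p₂.subtype) p₃.subtype))
    (hT₂ : T₂ ∈ range (map (map q₁.subtype q₂.subtype) q₃.subtype)) :
    (p₁.projection q₁ h₁, p₂.projection q₂ h₂, p₃.projection q₃ h₃) ∈ Cen (T₁ + T₂) := by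
  open Submodule in
  refine mem_cen_add_of_add_eq_one (d := (q₁.projection p₁ h₁.symm, q₂.projection p₂ h₂.symm,
    q₃.projection p₃ h₃.symm)) ?_ ?_ ?_
  · simp only [Prod.mk_add_mk, projection_add_projection_eq_id]
    rfl
  · exact app_eq_self_of_mem_range_map_map_subtype (fun _ ↦ projection_apply_of_mem_left h₁)
      (fun _ ↦ projection_apply_of_mem_left h₂) (fun _ ↦ projection_apply_of_mem_left h₃) hT₁
  · exact app_eq_self_of_mem_range_map_map_subtype
      (fun _ ↦ projection_apply_of_mem_left h₁.symm) (fun _ ↦ projection_apply_of_mem_left h₂.symm)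
      (fun _ ↦ projection_apply_of_mem_left h₃.symm) hT₂

end

/-- A concise tensor admits a nontrivial idempotent in its centroid iff it is a
direct sum of two nonzero tensors in complementary products of subspaces. -/
theorem stmt_11 (T : (V1 ⊗[k] V2) ⊗[k] V3) (hT : Concise T) :
    (∃ X : Module.End k V1 × Module.End k V2 × Module.End k V3,
        X ∈ Cen T ∧ X * X = X ∧ X ≠ 0 ∧ X ≠ 1) ↔
    (∃ (W11 W12 : Submodule k V1) (W21 W22 : Submodule k V2) (W31 W32 : Submodule k V3),
        IsCompl W11 W12 ∧ IsCompl W21 W22 ∧ IsCompl W31 W32 ∧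
        W11 ≠ ⊥ ∧ W12 ≠ ⊥ ∧ W21 ≠ ⊥ ∧ W22 ≠ ⊥ ∧ W31 ≠ ⊥ ∧ W32 ≠ ⊥ ∧
        ∃ T1 T2 : (V1 ⊗[k] V2) ⊗[k] V3, T1 ≠ 0 ∧ T2 ≠ 0 ∧
          T1 ∈ LinearMap.range
            (TensorProduct.map (TensorProduct.map W11.subtype W21.subtype) W31.subtype) ∧
          T2 ∈ LinearMap.range
            (TensorProduct.map (TensorProduct.map W12.subtype W22.subtype) W32.subtype) ∧
          T = T1 + T2) := by
  constructor
  · rintro ⟨c, hc, hidem : IsIdempotentElem c, hc₀, hc₁⟩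
    have hd : 1 - c ∈ Cen T := one_sub_mem_cen hc
    have hT₁ : app1 c.1 T ≠ 0 := mt (hT.eq_zero_of_mem_cen hc hidem) hc₀
    have hT₂ : app1 (1 - c).1 T ≠ 0 :=
      mt (hT.eq_zero_of_mem_cen hd hidem.one_sub) (sub_ne_zero.mpr hc₁.symm)
    obtain ⟨h₁, h₂, h₃⟩ := Prod.isIdempotentElem_iff₃.mp hidem
    obtain ⟨r₁₁, r₂₁, r₃₁⟩ := range_ne_bot_of_mem_cen hc hT₁
    obtain ⟨r₁₂, r₂₂, r₃₂⟩ := range_ne_bot_of_mem_cen hd hT₂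
    exact ⟨range c.1, range (1 - c).1, range c.2.1, range (1 - c).2.1, range c.2.2,
      range (1 - c).2.2, h₁.isCompl_range_one_sub, h₂.isCompl_range_one_sub,
      h₃.isCompl_range_one_sub, r₁₁, r₁₂, r₂₁, r₂₂, r₃₁, r₃₂, app1 c.1 T, app1 (1 - c).1 T, hT₁,
      hT₂, app1_mem_range_of_mem_cen hc hidem, app1_mem_range_of_mem_cen hd hidem.one_sub,
      by rw [Prod.fst_sub, Prod.fst_one, app1_one_sub, add_sub_cancel]⟩
  · rintro ⟨W11, W12, W21, W22, W31, W32, h₁, h₂, h₃, hW11, hW12, -, -, -, -, T1, T2, -, -,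
      hT1, hT2, rfl⟩
    refine ⟨_, projection_mem_cen_add h₁ h₂ h₃ hT1 hT2, Prod.isIdempotentElem_iff₃.mpr
      ⟨Submodule.isIdempotentElem_projection h₁, Submodule.isIdempotentElem_projection h₂,
        Submodule.isIdempotentElem_projection h₃⟩, ?_, ?_⟩
    · exact ne_of_apply_ne (fun c ↦ range c.1) (by simpa using hW11)
    · exact ne_of_apply_ne (fun c ↦ ker c.1) (by simpa [Module.End.one_eq_id] using hW12)
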